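/- For every k-edge-colored adjacency matrix A there exists an adjacency matrix A' isomorphic to A (by a vertex permutation) such that the degree matrix α(A') has lexicographically non-increasing rows after a suitable column permutation and the symmetry-breaking predicate sb*_ℓ(A', α(A')) holds. -/

import Mathlib

/-!
Order the vertices so that the degree rows are lexicographically non-increasing, and among all
such orders take one whose adjacency matrix has the lexicographically least strict upper
triangle. If `sb*` failed at `i < j`, then rows `i` and `j` of the degree matrix agree, so
swapping `i` and `j` keeps the degree rows sorted; and at the first column `t ∉ {i, j}` where
the adjacency rows of `i` and `j` differ, the swap lowers the upper triangle at position
`(min i t, max i t)` while leaving all earlier positions unchanged (by symmetry), a contradiction.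
-/

/-- The degree of vertex `v` in color `c` for a `k`-edge-coloring `κ` of `K_n`. -/
def degc {n k : ℕ} (κ : Fin n → Fin n → Fin k) (c : Fin k) (v : Fin n) : ℕ :=
  (Finset.univ.filter (fun u => u ≠ v ∧ κ v u = c)).card

/-- There is a monochromatic clique of size `m` in color `c` inside the vertex set `S`. -/
def monoCliqueIn {n k : ℕ} (κ : Fin n → Fin n → Fin k) (c : Fin k) (m : ℕ)
    (S : Finset (Fin n)) : Prop :=
  ∃ T ⊆ S, T.card = m ∧ ∀ u ∈ T, ∀ v ∈ T, u ≠ v → κ u v = c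

/-- There is a monochromatic clique of size `m` in color `c`. -/
def monoClique {n k : ℕ} (κ : Fin n → Fin n → Fin k) (c : Fin k) (m : ℕ) : Prop :=
  monoCliqueIn κ c m Finset.univ

/-- The set of `c`-colored neighbors of `v`. -/
def nbhd {n k : ℕ} (κ : Fin n → Fin n → Fin k) (c : Fin k) (v : Fin n) : Finset (Fin n) :=
  Finset.univ.filter (fun u => u ≠ v ∧ κ v u = c)

/-- The degree matrix of a coloring: entry `(i,j)` is the degree of vertex `i` in color `j`. -/
def degMatrix {n k : ℕ} (κ : Fin n → Fin n → Fin k) : Fin n → Fin k → ℕ :=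
  fun i j => degc κ j i

/-- Simultaneously permuting rows and columns of an adjacency matrix by `π`. -/
def permMat {n k : ℕ} (π : Equiv.Perm (Fin n)) (A : Fin n → Fin n → Fin k) :
    Fin n → Fin n → Fin k :=
  fun i j => A (π.symm i) (π.symm j)

/-- Row `r` of `A` as a list, after simultaneously omitting positions `i` and `j`. -/
def restrictedRow {n k : ℕ} (A : Fin n → Fin n → Fin k) (r i j : Fin n) : List (Fin k) :=
  ((List.finRange n).filter (fun t => t ≠ i ∧ t ≠ j)).map (A r)

/-- The symmetry-breaking predicate `sb*_ℓ(A, M)`: whenever rows `i < j` of the degree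
matrix `M` are equal, row `i` of `A` is lexicographically at most row `j` of `A` after
simultaneously omitting positions `i` and `j`. -/
def sbStar {n k : ℕ} (A : Fin n → Fin n → Fin k) (M : Fin n → Fin k → ℕ) : Prop :=
  ∀ i j : Fin n, i < j → (∀ c, M i c = M j c) →
    restrictedRow A i i j ≤ restrictedRow A j i j

open Equiv

theorem List.exists_of_map_lt_map {α β : Type*} [Preorder α] [LT β] {f g : α → β} :
    ∀ {l : List α}, l.Pairwise (· < ·) → l.map f < l.map g →
      ∃ a ∈ l, (∀ b ∈ l, b < a → f b = g b) ∧ f a < g a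
  | [], _, h => absurd h (List.not_lt_nil _)
  | x :: t, hl, h => by
    rw [List.pairwise_cons] at hl
    rcases List.cons_lt_cons_iff.1 h with hx | ⟨hx, ht⟩
    · refine ⟨x, List.mem_cons_self, fun b hb hbx => ?_, hx⟩
      rcases List.mem_cons.1 hb with rfl | hbt
      · exact absurd hbx (lt_irrefl b)
      · exact absurd hbx (hl.1 b hbt).asymm
    · obtain ⟨a, hat, hbefore, ha⟩ := List.exists_of_map_lt_map hl.2 ht
      refine ⟨a, List.mem_cons_of_mem x hat, fun b hb hba => ?_, ha⟩
      rcases List.mem_cons.1 hb with rfl | hbt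
      · exact hx
      · exact hbefore b hbt hba

theorem exists_lt_of_restrictedRow_lt {n k : ℕ} {A : Fin n → Fin n → Fin k} {r r' i j : Fin n}
    (h : restrictedRow A r i j < restrictedRow A r' i j) :
    ∃ t, t ≠ i ∧ t ≠ j ∧ (∀ u, u ≠ i → u ≠ j → u < t → A r u = A r' u) ∧
      A r t < A r' t := by
  obtain ⟨t, ht, hbefore, hlt⟩ :=
    List.exists_of_map_lt_map ((List.pairwise_lt_finRange n).filter _) h
  have hmem :
      ∀ u, u ∈ (List.finRange n).filter (fun t => t ≠ i ∧ t ≠ j) ↔ u ≠ i ∧ u ≠ j := by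
    simp
  obtain ⟨hti, htj⟩ := (hmem t).1 ht
  exact ⟨t, hti, htj, fun u hui huj hut => hbefore u ((hmem u).2 ⟨hui, huj⟩) hut, hlt⟩

section UpperKey

variable {ι α : Type*} [LinearOrder ι]

/-- The diagonal is left out: a vertex swap moves it, and no hypothesis constrains it. -/
def upperKey (B : ι → ι → α) : Lex ({p : ι ×ₗ ι // (ofLex p).1 < (ofLex p).2} → α) :=
  toLex fun p => B (ofLex p.1).1 (ofLex p.1).2

variable {B : ι → ι → α} {i j t : ι}

theorem swap_apply_swap_apply_eq_of_lt (hB : ∀ u v, B u v = B v u)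
    (hagree : ∀ u, u ≠ i → u ≠ j → u < t → B j u = B i u)
    {r : ι} (hri : r ≠ i) (hrj : r ≠ j) (hrt : r < t) (c : ι) :
    B (swap i j r) (swap i j c) = B r c := by
  rw [swap_apply_of_ne_of_ne hri hrj]
  rcases eq_or_ne c i with rfl | hci
  · rw [swap_apply_left, hB, hagree r hri hrj hrt, hB]
  rcases eq_or_ne c j with rfl | hcj
  · rw [swap_apply_right, hB, ← hagree r hri hrj hrt, hB]
  · rw [swap_apply_of_ne_of_ne hci hcj]

theorem upperKey_swap_lt [LT α] (hB : ∀ u v, B u v = B v u) (hij : i < j) (hti : t ≠ i)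
    (htj : t ≠ j) (hagree : ∀ u, u ≠ i → u ≠ j → u < t → B j u = B i u)
    (hlt : B j t < B i t) :
    upperKey (fun r c => B (swap i j r) (swap i j c)) < upperKey B := by
  have hfix : ∀ {r}, r ≠ i → r ≠ j → swap i j r = r := swap_apply_of_ne_of_ne
  -- The first position where the key changes is `(min t i, max t i)`.
  rcases lt_or_gt_of_ne hti with hti' | hit
  · refine ⟨⟨toLex (t, i), hti'⟩, fun ⟨⟨r, c⟩, hrc⟩ hlex => ?_, ?_⟩
    · change B (swap i j r) (swap i j c) = B r c
      have hlex : toLex (r, c) < toLex (t, i) := hlex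
      rcases Prod.Lex.toLex_lt_toLex.1 hlex with hrt | ⟨hrt, hci⟩
      · exact swap_apply_swap_apply_eq_of_lt hB hagree (hrt.trans hti').ne
          (hrt.trans (hti'.trans hij)).ne hrt c
      · change r = t at hrt
        change c < i at hci
        rw [hrt, hfix hti htj, hfix hci.ne (hci.trans hij).ne]
    · change B (swap i j t) (swap i j i) < B t i
      rwa [hfix hti htj, swap_apply_left, hB, hB t i]
  · refine ⟨⟨toLex (i, t), hit⟩, fun ⟨⟨r, c⟩, hrc⟩ hlex => ?_, ?_⟩
    · change B (swap i j r) (swap i j c) = B r c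
      change r < c at hrc
      have hlex : toLex (r, c) < toLex (i, t) := hlex
      rcases Prod.Lex.toLex_lt_toLex.1 hlex with hri | ⟨hri, hct⟩
      · exact swap_apply_swap_apply_eq_of_lt hB hagree hri.ne (hri.trans hij).ne
          (hri.trans hit) c
      · change r = i at hri
        subst hri
        rcases eq_or_ne c j with rfl | hcj
        · rw [swap_apply_left, swap_apply_right, hB]
        · rw [swap_apply_left, hfix hrc.ne' hcj]
          exact hagree c hrc.ne' hcj hct
    · change B (swap i j i) (swap i j t) < B i t
      rwa [swap_apply_left, hfix hti htj]

end UpperKey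

theorem exists_perm_antitone_comp {α : Type*} [LinearOrder α] {n : ℕ} (f : Fin n → α) :
    ∃ π : Perm (Fin n), Antitone (f ∘ π) :=
  ⟨Tuple.sort (OrderDual.toDual ∘ f), monotone_toDual_comp_iff.1 (Tuple.monotone_sort _)⟩

section PermMat

variable {n k : ℕ}

theorem permMat_mul (σ π : Perm (Fin n)) (A : Fin n → Fin n → Fin k) :
    permMat (σ * π) A = permMat σ (permMat π A) :=
  rfl

theorem permMat_swap (i j : Fin n) (A : Fin n → Fin n → Fin k) :
    permMat (swap i j) A = fun r c => A (swap i j r) (swap i j c) :=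
  rfl

theorem degMatrix_permMat (π : Perm (Fin n)) (A : Fin n → Fin n → Fin k) (r : Fin n) :
    degMatrix (permMat π A) r = degMatrix A (π.symm r) := by
  funext c
  unfold degMatrix degc
  refine Finset.card_equiv π.symm fun u => ?_
  simp only [Finset.mem_filter]
  simp [permMat]

theorem degMatrix_permMat_swap_of_eq {A : Fin n → Fin n → Fin k} {i j : Fin n}
    (h : degMatrix A i = degMatrix A j) : degMatrix (permMat (swap i j) A) = degMatrix A := by
  funext r
  rw [degMatrix_permMat, symm_swap]
  rcases eq_or_ne r i with rfl | hri
  · rw [swap_apply_left, h]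
  rcases eq_or_ne r j with rfl | hrj
  · rw [swap_apply_right, h]
  · rw [swap_apply_of_ne_of_ne hri hrj]

end PermMat

/-- Every coloring has an isomorphic copy whose degree matrix has lexicographically
non-increasing rows after a suitable column permutation, and which satisfies the
symmetry-breaking predicate with respect to its own degree matrix. -/
theorem exists_iso_sorted_sbStar {n k : ℕ} (A : Fin n → Fin n → Fin k)
    (hsym : ∀ u v, A u v = A v u) :
    ∃ (π : Equiv.Perm (Fin n)) (σ : Equiv.Perm (Fin k)),
      (∀ i j : Fin n, i ≤ j →
        List.ofFn (fun c => degMatrix (permMat π A) j (σ c)) ≤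
          List.ofFn (fun c => degMatrix (permMat π A) i (σ c))) ∧
      sbStar (permMat π A) (degMatrix (permMat π A)) := by
  classical
  let Sorted (π : Perm (Fin n)) : Prop :=
    Antitone fun r => List.ofFn (degMatrix (permMat π A) r)
  obtain ⟨π₀, hπ₀⟩ := exists_perm_antitone_comp fun r => List.ofFn (degMatrix A r)
  have hπ₀' : π₀.symm ∈ Finset.univ.filter Sorted := by
    simpa [Sorted, degMatrix_permMat, Function.comp_def] using hπ₀
  obtain ⟨π, hπ, hmin⟩ :=
    (Finset.univ.filter Sorted).exists_min_image (upperKey <| permMat · A) ⟨_, hπ₀'⟩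
  have hsorted : Sorted π := (Finset.mem_filter.1 hπ).2
  refine ⟨π, 1, fun i j hij => by simpa using hsorted hij, fun i j hij hdeg => ?_⟩
  by_contra hnot
  obtain ⟨t, hti, htj, hagree, hlt⟩ := exists_lt_of_restrictedRow_lt (not_le.1 hnot)
  have hrows : degMatrix (permMat (swap i j * π) A) = degMatrix (permMat π A) := by
    rw [permMat_mul]
    exact degMatrix_permMat_swap_of_eq (funext hdeg)
  refine (hmin (swap i j * π) (by simpa [Sorted, hrows] using hsorted)).not_gt ?_
  rw [permMat_mul, permMat_swap]
  exact upperKey_swap_lt (fun u v => hsym _ _) hij hti htj hagree hlt
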